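/- Let X be a nonzero real Banach space. Then X admits almost Daugavet points if and only if sup_{x ∈ S_X} Dc(x) = 2. -/

import Mathlib

/-! Both conditions say that, up to ε, some point of the ball is at distance almost 2 from
every slice. By Hahn–Banach, `B_X ⊆ cl conv Δ_ε(x)` exactly when every slice meets `Δ_ε(x)`,
which yields `Dc x ≥ 2 - ε`; conversely `Dc p > 2 - ε` puts a point of `Δ_ε(p)` in every slice.
A point `x` with nonempty `Δ_ε(x)` has `‖x‖ ≥ 1 - ε`, and since `Dc` is 1-Lipschitz, its
normalisation `x / ‖x‖` still has `Dc ≥ 2 - 2ε`. -/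

open Set Metric Filter

variable {X : Type*} [NormedAddCommGroup X] [NormedSpace ℝ X]

/-- The slice `S(f, δ)` of the closed unit ball of `X`, determined by a norm-one functional
`f` and `δ > 0` (the norm and positivity conditions are imposed at use sites). -/
def unitBallSlice (f : X →L[ℝ] ℝ) (δ : ℝ) : Set X :=
  {y | ‖y‖ ≤ 1 ∧ 1 - δ < f y}

/-- The Daugavet constant of a point: the infimum over all slices of the unit ball of the
supremum of distances from `x` to points of the slice. -/
noncomputable def Dc (x : X) : ℝ :=
  sInf {r | ∃ (f : X →L[ℝ] ℝ) (δ : ℝ), ‖f‖ = 1 ∧ 0 < δ ∧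
    r = sSup ((fun y => ‖x - y‖) '' unitBallSlice f δ)}

/-- The Δ-constant of a point: the infimum over all slices of the unit ball containing `x`
of the supremum of distances from `x` to points of the slice. -/
noncomputable def DeltaC (x : X) : ℝ :=
  sInf {r | ∃ (f : X →L[ℝ] ℝ) (δ : ℝ), ‖f‖ = 1 ∧ 0 < δ ∧ x ∈ unitBallSlice f δ ∧
    r = sSup ((fun y => ‖x - y‖) '' unitBallSlice f δ)}

/-- The set `Δ_ε(x)` of points of the unit ball at distance at least `2 - ε` from `x`. -/
def DeltaSet (x : X) (ε : ℝ) : Set X :=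
  {y | ‖y‖ ≤ 1 ∧ 2 - ε ≤ ‖y - x‖}

lemma exists_norm_le_one_lt_apply (f : X →L[ℝ] ℝ) {c : ℝ} (hc : c < ‖f‖) :
    ∃ y : X, ‖y‖ ≤ 1 ∧ c < f y := by
  obtain ⟨y, hy, hcy⟩ := f.exists_lt_apply_of_lt_opNorm hc
  rcases le_or_gt 0 (f y) with hpos | hneg
  · exact ⟨y, hy.le, by rwa [Real.norm_of_nonneg hpos] at hcy⟩
  · exact ⟨-y, by simpa using hy.le, by rwa [Real.norm_of_nonpos hneg.le, ← map_neg] at hcy⟩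

lemma norm_sub_inv_norm_smul {x : X} (hx₀ : x ≠ 0) (hx : ‖x‖ ≤ 1) :
    ‖x - ‖x‖⁻¹ • x‖ = 1 - ‖x‖ := by
  have hpos : 0 < ‖x‖ := norm_pos_iff.mpr hx₀
  have hinv : 1 ≤ ‖x‖⁻¹ := (one_le_inv₀ hpos).mpr hx
  have hsub : x - ‖x‖⁻¹ • x = (1 - ‖x‖⁻¹) • x := by rw [sub_smul, one_smul]
  rw [hsub, norm_smul, Real.norm_of_nonpos (by linarith), neg_sub, sub_mul,
    inv_mul_cancel₀ hpos.ne', one_mul]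

theorem unitBall_subset_closure_convexHull_iff {A : Set X} :
    {y : X | ‖y‖ ≤ 1} ⊆ closure (convexHull ℝ A) ↔
      ∀ (f : X →L[ℝ] ℝ) (c : ℝ), c < ‖f‖ → ∃ a ∈ A, c < f a := by
  constructor
  · intro hA f c hc
    obtain ⟨y, hy, hcy⟩ := exists_norm_le_one_lt_apply f hc
    obtain ⟨z, hcz, hz⟩ := mem_closure_iff.mp (hA hy) {v | c < f v}
      (isOpen_lt continuous_const f.continuous) hcy
    by_contra! hle
    have hzc : f z ≤ c := convexHull_min hle (convex_halfSpace_le f.isLinear c) hz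
    exact hzc.not_gt hcz
  · intro hA y hy
    by_contra hyC
    obtain ⟨f, u, hfC, hfy⟩ := geometric_hahn_banach_closed_point
      (convex_convexHull ℝ A).closure isClosed_closure hyC
    have hfy_le : f y ≤ ‖f‖ := by
      simpa using (le_abs_self (f y)).trans (f.le_opNorm_of_le hy)
    obtain ⟨a, ha, hua⟩ := hA f u (hfy.trans_le hfy_le)
    exact (hfC a (subset_closure (subset_convexHull ℝ A ha))).not_gt hua

lemma exists_mem_lt_apply_of_forall_slice [Nontrivial X] {A : Set X}
    (hA : ∀ f : X →L[ℝ] ℝ, ‖f‖ = 1 → ∀ δ > 0, ∃ a ∈ A, 1 - δ < f a)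
    (f : X →L[ℝ] ℝ) {c : ℝ} (hc : c < ‖f‖) : ∃ a ∈ A, c < f a := by
  rcases eq_or_ne f 0 with rfl | hf
  · obtain ⟨g, hg, -⟩ := exists_dual_vector' ℝ (0 : X)
    obtain ⟨a, ha, -⟩ := hA g hg 1 one_pos
    exact ⟨a, ha, by simpa using hc⟩
  · have hpos : 0 < ‖f‖ := norm_pos_iff.mpr hf
    obtain ⟨a, ha, hca⟩ := hA (‖f‖⁻¹ • f) (by rw [norm_smul, norm_inv, norm_norm,
      inv_mul_cancel₀ hpos.ne']) (1 - c / ‖f‖) (sub_pos.mpr ((div_lt_one hpos).mpr hc))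
    refine ⟨a, ha, ?_⟩
    rw [sub_sub_cancel, smul_apply, smul_eq_mul, ← div_eq_inv_mul,
      div_lt_div_iff_of_pos_right hpos] at hca
    exact hca

lemma unitBallSlice_nonempty {f : X →L[ℝ] ℝ} (hf : ‖f‖ = 1) {δ : ℝ} (hδ : 0 < δ) :
    (unitBallSlice f δ).Nonempty :=
  exists_norm_le_one_lt_apply f (c := 1 - δ) (by linarith)

lemma bddAbove_norm_sub_image_unitBallSlice (x : X) (f : X →L[ℝ] ℝ) (δ : ℝ) :
    BddAbove ((fun y => ‖x - y‖) '' unitBallSlice f δ) := by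
  refine ⟨‖x‖ + 1, ?_⟩
  rintro _ ⟨y, hy, rfl⟩
  linarith [norm_sub_le x y, hy.1]

lemma Dc_le_of_forall_mem_unitBallSlice {x : X} {f : X →L[ℝ] ℝ} (hf : ‖f‖ = 1) {δ r : ℝ}
    (hδ : 0 < δ) (h : ∀ y ∈ unitBallSlice f δ, ‖x - y‖ ≤ r) : Dc x ≤ r := by
  have hbdd : BddBelow {r | ∃ (f : X →L[ℝ] ℝ) (δ : ℝ), ‖f‖ = 1 ∧ 0 < δ ∧
      r = sSup ((fun y => ‖x - y‖) '' unitBallSlice f δ)} := by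
    refine ⟨0, ?_⟩
    rintro _ ⟨g, ε, hg, hε, rfl⟩
    obtain ⟨y, hy⟩ := unitBallSlice_nonempty hg hε
    exact (norm_nonneg _).trans
      (le_csSup (bddAbove_norm_sub_image_unitBallSlice x g ε) ⟨y, hy, rfl⟩)
  refine (csInf_le hbdd ⟨f, δ, hf, hδ, rfl⟩).trans ?_
  exact csSup_le ((unitBallSlice_nonempty hf hδ).image _) (by rintro _ ⟨y, hy, rfl⟩; exact h y hy)

lemma exists_mem_unitBallSlice_lt_norm_sub {x : X} {r : ℝ} (hr : r < Dc x)
    {f : X →L[ℝ] ℝ} (hf : ‖f‖ = 1) {δ : ℝ} (hδ : 0 < δ) :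
    ∃ y ∈ unitBallSlice f δ, r < ‖x - y‖ := by
  by_contra! h
  exact hr.not_ge (Dc_le_of_forall_mem_unitBallSlice hf hδ h)

lemma le_Dc_of_forall_unitBallSlice [Nontrivial X] {x : X} {r : ℝ}
    (h : ∀ f : X →L[ℝ] ℝ, ‖f‖ = 1 → ∀ δ > 0, ∃ y ∈ unitBallSlice f δ, r ≤ ‖x - y‖) :
    r ≤ Dc x := by
  obtain ⟨g, hg, -⟩ := exists_dual_vector' ℝ (0 : X)
  refine le_csInf ⟨_, g, 1, hg, one_pos, rfl⟩ ?_
  rintro _ ⟨f, δ, hf, hδ, rfl⟩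
  obtain ⟨y, hy, hry⟩ := h f hf δ hδ
  exact hry.trans (le_csSup (bddAbove_norm_sub_image_unitBallSlice x f δ) ⟨y, hy, rfl⟩)

lemma Dc_le_norm_add_one [Nontrivial X] (x : X) : Dc x ≤ ‖x‖ + 1 := by
  obtain ⟨f, hf, -⟩ := exists_dual_vector' ℝ (0 : X)
  exact Dc_le_of_forall_mem_unitBallSlice hf one_pos fun y hy => by
    linarith [norm_sub_le x y, hy.1]

lemma Dc_le_Dc_add_norm_sub [Nontrivial X] (x p : X) : Dc x ≤ Dc p + ‖x - p‖ := by
  refine le_of_forall_lt_imp_le_of_dense fun r hr => ?_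
  suffices r - ‖x - p‖ ≤ Dc p by linarith
  refine le_Dc_of_forall_unitBallSlice fun f hf δ hδ => ?_
  obtain ⟨y, hy, hry⟩ := exists_mem_unitBallSlice_lt_norm_sub hr hf hδ
  exact ⟨y, hy, by linarith [norm_sub_le_norm_sub_add_norm_sub x p y]⟩

lemma two_sub_le_Dc_of_unitBall_subset [Nontrivial X] {x : X} {ε : ℝ}
    (hx : {y : X | ‖y‖ ≤ 1} ⊆ closure (convexHull ℝ (DeltaSet x ε))) : 2 - ε ≤ Dc x := by
  refine le_Dc_of_forall_unitBallSlice fun f hf δ hδ => ?_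
  obtain ⟨a, ha, hδa⟩ := unitBall_subset_closure_convexHull_iff.mp hx f (1 - δ) (by linarith)
  exact ⟨a, ⟨ha.1, hδa⟩, by rw [norm_sub_rev]; exact ha.2⟩

lemma unitBall_subset_closure_convexHull_DeltaSet_of_lt_Dc [Nontrivial X] {p : X} {ε : ℝ}
    (hp : 2 - ε < Dc p) : {y : X | ‖y‖ ≤ 1} ⊆ closure (convexHull ℝ (DeltaSet p ε)) := by
  refine unitBall_subset_closure_convexHull_iff.mpr fun f c hc =>
    exists_mem_lt_apply_of_forall_slice (fun g hg δ hδ => ?_) f hc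
  obtain ⟨y, hy, hpy⟩ := exists_mem_unitBallSlice_lt_norm_sub hp hg hδ
  exact ⟨y, ⟨hy.1, by rw [norm_sub_rev]; exact hpy.le⟩, hy.2⟩

lemma exists_norm_eq_one_two_sub_two_mul_le_Dc [Nontrivial X] {x : X} {ε : ℝ} (hε : ε < 1)
    (hx : ‖x‖ ≤ 1) (hsub : {y : X | ‖y‖ ≤ 1} ⊆ closure (convexHull ℝ (DeltaSet x ε))) :
    ∃ p : X, ‖p‖ = 1 ∧ 2 - 2 * ε ≤ Dc p := by
  obtain ⟨w, hw⟩ : (DeltaSet x ε).Nonempty := by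
    obtain ⟨f, hf, -⟩ := exists_dual_vector' ℝ (0 : X)
    obtain ⟨a, ha, -⟩ := unitBall_subset_closure_convexHull_iff.mp hsub f 0 (by simp [hf])
    exact ⟨a, ha⟩
  have hx_pos : 0 < ‖x‖ := by linarith [norm_sub_le w x, hw.1, hw.2]
  have hx₀ : x ≠ 0 := norm_pos_iff.mp hx_pos
  refine ⟨‖x‖⁻¹ • x, norm_smul_inv_norm hx₀, ?_⟩
  linarith [two_sub_le_Dc_of_unitBall_subset hsub, Dc_le_Dc_add_norm_sub x (‖x‖⁻¹ • x),
    norm_sub_inv_norm_smul hx₀ hx, norm_sub_le w x, hw.1, hw.2]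

theorem almostDaugavetPoints_iff_general [Nontrivial X] :
    (∀ ε > (0 : ℝ), ∃ x : X, ‖x‖ ≤ 1 ∧
        {y : X | ‖y‖ ≤ 1} ⊆ closure (convexHull ℝ (DeltaSet x ε))) ↔
      sSup (Dc '' {x : X | ‖x‖ = 1}) = 2 := by
  have hne : (Dc '' {x : X | ‖x‖ = 1}).Nonempty := 
    Set.Nonempty.image Dc (exists_norm_eq X zero_le_one)
  have hle : ∀ r ∈ Dc '' {x : X | ‖x‖ = 1}, r ≤ 2 := by
    rintro _ ⟨x, hx, rfl⟩
    linarith [Dc_le_norm_add_one x, show ‖x‖ = 1 from hx]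
  constructor
  · intro h
    refine le_antisymm (csSup_le hne hle) (le_iff_forall_pos_le_add.mpr fun ε hε => ?_)
    obtain ⟨x, hx, hsub⟩ := h (min (ε / 2) (1 / 2)) (by positivity)
    obtain ⟨p, hp, hDc⟩ := exists_norm_eq_one_two_sub_two_mul_le_Dc
      ((min_le_right _ _).trans_lt one_half_lt_one) hx hsub
    linarith [le_csSup ⟨2, hle⟩ ⟨p, hp, rfl⟩, min_le_left (ε / 2) (1 / 2)]
  · intro h ε hε
    obtain ⟨_, ⟨p, hp, rfl⟩, hlt⟩ := exists_lt_of_lt_csSup hne (by linarith : 2 - ε < sSup _)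
    exact ⟨p, hp.le, unitBall_subset_closure_convexHull_DeltaSet_of_lt_Dc hlt⟩

/-- A nonzero Banach space admits almost Daugavet points iff the supremum of the Daugavet
constants over the unit sphere is 2. -/
theorem almostDaugavetPoints_iff [CompleteSpace X] [Nontrivial X] :
    (∀ ε > (0 : ℝ), ∃ x : X, ‖x‖ ≤ 1 ∧
        {y : X | ‖y‖ ≤ 1} ⊆ closure (convexHull ℝ (DeltaSet x ε))) ↔
      sSup (Dc '' {x : X | ‖x‖ = 1}) = 2 :=
  almostDaugavetPoints_iff_general
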